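/- arXiv:0903.4310 — 4 statements merged into one kernel-verified Lean document; each statement's English description precedes it below -/
import Mathlib

section
/- Let k be a field, let M be an affine semigroup in ℤ^n, and let F be a face of M. Then the ideal p_F of k[M] generated by the monomials t^a with a ∈ M \ F is a prime ideal, and the quotient ring k[M]/p_F is isomorphic as a k-algebra to the semigroup ring k[F] of the face F. -/
/-- `F` is a face of the affine semigroup `M ⊆ ℤⁿ`: an additive submonoid of `M` such that
`a + b ∈ F` with `a, b ∈ M` forces `a ∈ F` and `b ∈ F`. -/
def IsFace {n : ℕ} (M F : AddSubmonoid (Fin n → ℤ)) : Prop :=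
  F ≤ M ∧ ∀ a ∈ M, ∀ b ∈ M, a + b ∈ F → a ∈ F ∧ b ∈ F

/-- The ideal `p_F` of `k[M]` generated by the monomials `t^a` with `a ∈ M \ F`. -/
noncomputable def facePrime (k : Type*) [Field k] {n : ℕ} (M F : AddSubmonoid (Fin n → ℤ)) :
    Ideal (AddMonoidAlgebra k M) :=
  Ideal.span {x | ∃ a : M, (a : Fin n → ℤ) ∉ F ∧ x = AddMonoidAlgebra.of' k M a}

/-! The monomial map `t^a ↦ t^a` for `a ∈ F`, `t^a ↦ 0` for `a ∈ M \ F` is multiplicative exactly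
because `F` is a face, so it is a `k`-algebra map `k[M] → k[F]`. It is split by the inclusion
`k[F] ⊆ k[M]`, and its kernel is spanned by the monomials it kills, i.e. it is `p_F`. Finally
`k[F]` is a domain since `F ⊆ ℤⁿ` has unique sums, so `p_F` is prime. -/

open AddMonoidAlgebra

instance AddSubmonoid.uniqueSums {G : Type*} [AddZeroClass G] [UniqueSums G]
    (F : AddSubmonoid G) : UniqueSums F :=
  UniqueSums.of_injective_addHom F.subtype.toAddHom Subtype.coe_injective ‹_›

section FaceProjection

variable (k : Type*) {G : Type*} [CommSemiring k] [AddCommMonoid G] {M F : AddSubmonoid G}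

open Classical in
noncomputable def faceProjection (hface : ∀ a ∈ M, ∀ b ∈ M, a + b ∈ F → a ∈ F ∧ b ∈ F) :
    AddMonoidAlgebra k M →ₐ[k] AddMonoidAlgebra k F :=
  lift k _ M
    { toFun := fun a => if h : (a.toAdd : G) ∈ F then of' k F ⟨a.toAdd, h⟩ else 0
      map_one' := by simp; rfl
      map_mul' := fun a b => by
        by_cases hab : (a.toAdd : G) + b.toAdd ∈ F
        · obtain ⟨ha, hb⟩ := hface _ a.toAdd.2 _ b.toAdd.2 hab
          simp [ha, hb, hab, of'_apply, single_mul_single]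
        · have hnot : ¬((a.toAdd : G) ∈ F ∧ (b.toAdd : G) ∈ F) := fun h => hab (F.add_mem h.1 h.2)
          by_cases ha : (a.toAdd : G) ∈ F <;> simp_all }

variable {k} (hface : ∀ a ∈ M, ∀ b ∈ M, a + b ∈ F → a ∈ F ∧ b ∈ F)

theorem faceProjection_of'_of_mem {a : M} (ha : (a : G) ∈ F) :
    faceProjection k hface (of' k M a) = of' k F ⟨a, ha⟩ := by
  simp [faceProjection, ha]

theorem faceProjection_of'_of_notMem {a : M} (ha : (a : G) ∉ F) :
    faceProjection k hface (of' k M a) = 0 := by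
  simp [faceProjection, ha]

theorem faceProjection_comp_mapDomainAlgHom (hFM : F ≤ M) :
    (faceProjection k hface).comp (mapDomainAlgHom k k (AddSubmonoid.inclusion hFM)) =
      AlgHom.id k (AddMonoidAlgebra k F) := by
  refine algHom_ext (fun b => ?_) (by ext)
  simpa [of'_apply] using faceProjection_of'_of_mem hface (a := AddSubmonoid.inclusion hFM b) b.2

theorem faceProjection_surjective (hFM : F ≤ M) : Function.Surjective (faceProjection k hface) :=
  Function.LeftInverse.surjective (g := mapDomainAlgHom k k (AddSubmonoid.inclusion hFM))
    (AlgHom.congr_fun (faceProjection_comp_mapDomainAlgHom hface hFM))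

theorem coeff_faceProjection (hFM : F ≤ M) (x : AddMonoidAlgebra k M) (b : F) :
    (faceProjection k hface x).coeff b = x.coeff (AddSubmonoid.inclusion hFM b) := by
  classical
  induction x using induction_linear with
  | zero => simp
  | add x y hx hy => simp [hx, hy]
  | single a c =>
    rw [← mul_one c, ← smul_eq_mul, ← smul_single, ← of'_apply, map_smul]
    by_cases ha : (a : G) ∈ F
    · rw [faceProjection_of'_of_mem hface ha]
      simp [of'_apply, Finsupp.single_apply, Subtype.ext_iff]
    · rw [faceProjection_of'_of_notMem hface ha]
      have hab : (a : G) ≠ b := fun h => ha (h ▸ b.2)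
      simp [of'_apply, Subtype.ext_iff, hab]

theorem faceProjection_eq_zero_iff (hFM : F ≤ M) {x : AddMonoidAlgebra k M} :
    faceProjection k hface x = 0 ↔ ∀ a ∈ x.coeff.support, (a : G) ∉ F := by
  refine ⟨fun h a ha haF => ?_, fun h => ?_⟩
  · have := coeff_faceProjection hface hFM x ⟨a, haF⟩
    rw [h] at this
    exact Finsupp.mem_support_iff.mp ha this.symm
  · ext b
    rw [coeff_faceProjection hface hFM]
    by_contra hb
    exact h _ (Finsupp.mem_support_iff.mpr hb) b.2

end FaceProjection

section FaceProjectionKer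

variable {k G : Type*} [CommRing k] [AddCommMonoid G] {M F : AddSubmonoid G}
  (hface : ∀ a ∈ M, ∀ b ∈ M, a + b ∈ F → a ∈ F ∧ b ∈ F)

theorem ker_faceProjection (hFM : F ≤ M) :
    RingHom.ker (faceProjection k hface) = Ideal.span (of' k M '' {a | (a : G) ∉ F}) := by
  ext x
  rw [RingHom.mem_ker, faceProjection_eq_zero_iff hface hFM, mem_ideal_span_of'_image]
  refine forall₂_congr fun a _ => ⟨fun ha => ⟨a, ha, 0, (zero_add a).symm⟩, ?_⟩
  rintro ⟨a', ha', d, rfl⟩ hda'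
  exact ha' (hface _ d.2 _ a'.2 hda').2

end FaceProjectionKer

theorem facePrime_eq_span_image (k : Type*) [Field k] {n : ℕ} (M F : AddSubmonoid (Fin n → ℤ)) :
    facePrime k M F = Ideal.span (of' k M '' {a | (a : Fin n → ℤ) ∉ F}) := by
  rw [facePrime]
  congr 1
  ext x
  simp [eq_comm]

theorem facePrime_isPrime_and_quotient_iso_general
    (k : Type*) [Field k] (n : ℕ)
    (M : AddSubmonoid (Fin n → ℤ))
    (F : AddSubmonoid (Fin n → ℤ)) (hF : IsFace M F) :
    (facePrime k M F).IsPrime ∧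
      Nonempty ((AddMonoidAlgebra k M ⧸ facePrime k M F) ≃ₐ[k] AddMonoidAlgebra k F) := by
  obtain ⟨hFM, hface⟩ := hF
  have hker : RingHom.ker (faceProjection k hface) = facePrime k M F := by
    rw [ker_faceProjection hface hFM, facePrime_eq_span_image]
  rw [← hker]
  exact ⟨RingHom.ker_isPrime _,
    ⟨Ideal.quotientKerAlgEquivOfSurjective (faceProjection_surjective hface hFM)⟩⟩

theorem facePrime_isPrime_and_quotient_iso
    (k : Type*) [Field k] (n : ℕ) (hn : 1 ≤ n)
    (M : AddSubmonoid (Fin n → ℤ)) (hM : M.FG)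
    (F : AddSubmonoid (Fin n → ℤ)) (hF : IsFace M F) :
    (facePrime k M F).IsPrime ∧
      Nonempty ((AddMonoidAlgebra k M ⧸ facePrime k M F) ≃ₐ[k] AddMonoidAlgebra k F) :=
  facePrime_isPrime_and_quotient_iso_general k n M F hF
end

section
/- Let k be a field and M an affine semigroup in ℤ^n. Every prime ideal of k[M] that is generated by a set of monomials t^a (a ∈ M) is equal to p_F for a unique face F of M. -/
/-!
The monomials outside a monomial prime `p` form a multiplicatively closed set that is saturated
under divisibility, so their exponents form a face `F`; and `p`, being generated by monomials, is
generated by the monomials it contains, i.e. `p = p_F`. Uniqueness holds because `t^a ∈ p_F`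
exactly when `a ∉ F`: a multiple `t^(d + b)` of a generator `t^b` of `p_F` cannot have its
exponent in `F`, since `F` is a face.
-/

namespace AddMonoidAlgebra

variable {k A : Type*} [Semiring k] [AddMonoid A]

theorem of'_add (a b : A) : of' k A (a + b) = of' k A a * of' k A b := by
  simp only [of'_apply, single_mul_single, mul_one]

theorem of'_mem_span_of'_image_iff [Nontrivial k] {s : Set A} {a : A} :
    of' k A a ∈ Ideal.span (of' k A '' s) ↔ ∃ b ∈ s, ∃ d, a = d + b := by
  rw [mem_ideal_span_of'_image, of'_apply, coeff_single, Finsupp.support_single _ one_ne_zero]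
  simp only [Finset.mem_singleton, forall_eq]

theorem span_of'_image_eq_span_of'_preimage {S : Set A} {p : Ideal (AddMonoidAlgebra k A)}
    (hgen : p = Ideal.span (of' k A '' S)) : p = Ideal.span (of' k A '' (of' k A ⁻¹' p)) := by
  refine le_antisymm ?_ (Ideal.span_le.mpr (Set.image_preimage_subset _ _))
  conv_lhs => rw [hgen]
  exact Ideal.span_mono (Set.image_mono fun a ha ↦ hgen ▸ Ideal.subset_span ⟨a, ha, rfl⟩)

end AddMonoidAlgebra

open AddMonoidAlgebra

section Faces

variable {k : Type*} [Field k] {n : ℕ} {M F : AddSubmonoid (Fin n → ℤ)}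

theorem facePrime_eq_span :
    facePrime k M F = Ideal.span (of' k M '' {a | (a : Fin n → ℤ) ∉ F}) := by
  unfold facePrime
  congr 1
  ext x
  constructor <;> rintro ⟨a, ha, rfl⟩ <;> exact ⟨a, ha, rfl⟩

theorem IsFace.of'_mem_facePrime_iff (hF : IsFace M F) (a : M) :
    of' k M a ∈ facePrime k M F ↔ (a : Fin n → ℤ) ∉ F := by
  rw [facePrime_eq_span, of'_mem_span_of'_image_iff]
  constructor
  · rintro ⟨b, hb, d, rfl⟩ had
    exact hb (hF.2 d d.2 b b.2 had).2
  · exact fun ha ↦ ⟨a, ha, 0, (zero_add a).symm⟩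

theorem IsFace.eq_of_facePrime_eq {F' : AddSubmonoid (Fin n → ℤ)} (hF : IsFace M F)
    (hF' : IsFace M F') (h : facePrime k M F = facePrime k M F') : F = F' := by
  have key (a : M) : (a : Fin n → ℤ) ∈ F ↔ (a : Fin n → ℤ) ∈ F' := by
    rw [← not_iff_not, ← hF.of'_mem_facePrime_iff (k := k),
      ← hF'.of'_mem_facePrime_iff (k := k), h]
  ext v
  exact ⟨fun hv ↦ (key ⟨v, hF.1 hv⟩).mp hv, fun hv ↦ (key ⟨v, hF'.1 hv⟩).mpr hv⟩

def monomialFace (p : Ideal (AddMonoidAlgebra k M)) [p.IsPrime] : AddSubmonoid (Fin n → ℤ) where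
  carrier := (↑) '' {a : M | of' k M a ∉ p}
  zero_mem' := ⟨0, by simpa [of'_apply, ← one_def] using p.one_notMem, rfl⟩
  add_mem' := by
    rintro _ _ ⟨a, ha, rfl⟩ ⟨b, hb, rfl⟩
    refine ⟨a + b, fun hab ↦ ?_, rfl⟩
    rw [of'_add] at hab
    exact (Ideal.IsPrime.mem_or_mem ‹_› hab).elim ha hb

variable {p : Ideal (AddMonoidAlgebra k M)} [p.IsPrime]

theorem coe_mem_monomialFace_iff (a : M) :
    (a : Fin n → ℤ) ∈ monomialFace p ↔ of' k M a ∉ p :=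
  Subtype.val_injective.mem_set_image

theorem isFace_monomialFace : IsFace M (monomialFace p) := by
  refine ⟨fun v ⟨a, _, hv⟩ ↦ hv ▸ a.2, fun a ha b hb hab ↦ ?_⟩
  replace hab : of' k M ⟨a, ha⟩ * of' k M ⟨b, hb⟩ ∉ p :=
    of'_add (k := k) (A := M) _ _ ▸ (coe_mem_monomialFace_iff (⟨a, ha⟩ + ⟨b, hb⟩)).mp hab
  exact ⟨(coe_mem_monomialFace_iff ⟨a, ha⟩).mpr fun h ↦ hab (p.mul_mem_right _ h),
    (coe_mem_monomialFace_iff ⟨b, hb⟩).mpr fun h ↦ hab (p.mul_mem_left _ h)⟩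

theorem facePrime_monomialFace {S : Set M} (hgen : p = Ideal.span (of' k M '' S)) :
    facePrime k M (monomialFace p) = p := by
  have hexp : {a : M | (a : Fin n → ℤ) ∉ monomialFace p} = of' k M ⁻¹' p := by
    ext a
    simp only [Set.mem_ofPred_eq, coe_mem_monomialFace_iff, not_not, Set.mem_preimage,
      SetLike.mem_coe]
  rw [facePrime_eq_span, hexp]
  exact (span_of'_image_eq_span_of'_preimage hgen).symm

end Faces

theorem monomial_prime_eq_facePrime_general
    (k : Type*) [Field k] (n : ℕ)
    (M : AddSubmonoid (Fin n → ℤ))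
    (p : Ideal (AddMonoidAlgebra k M)) (hp : p.IsPrime)
    (S : Set M) (hgen : p = Ideal.span ((fun a : M => AddMonoidAlgebra.of' k M a) '' S)) :
    ∃! F : AddSubmonoid (Fin n → ℤ), IsFace M F ∧ p = facePrime k M F := by
  have hface : IsFace M (monomialFace p) := isFace_monomialFace
  refine ⟨monomialFace p, ⟨hface, (facePrime_monomialFace hgen).symm⟩, ?_⟩
  rintro F ⟨hF, hpF⟩
  exact hF.eq_of_facePrime_eq hface (hpF.symm.trans (facePrime_monomialFace hgen).symm)

/-- Every monomial prime of `k[M]` is `p_F` for a unique face `F` of `M`. -/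
theorem monomial_prime_eq_facePrime
    (k : Type*) [Field k] (n : ℕ) (hn : 1 ≤ n)
    (M : AddSubmonoid (Fin n → ℤ)) (hM : M.FG)
    (p : Ideal (AddMonoidAlgebra k M)) (hp : p.IsPrime)
    (S : Set M) (hgen : p = Ideal.span ((fun a : M => AddMonoidAlgebra.of' k M a) '' S)) :
    ∃! F : AddSubmonoid (Fin n → ℤ), IsFace M F ∧ p = facePrime k M F :=
  monomial_prime_eq_facePrime_general k n M p hp S hgen
end

section
/- Let k be a field, M an affine semigroup in ℤ^n, and F a face of M. Let T_F be the multiplicative subset {t^a : a ∈ F} of k[M]. Then M − F := {a − b : a ∈ M, b ∈ F} is an additive submonoid of ℤ^n, and the localization T_F^{-1} k[M] is isomorphic as a k-algebra to the semigroup ring k[M − F]. -/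
/-- The multiplicative set `T_F = {t^a : a ∈ F}` of monomials of `k[M]` with exponent in `F`. -/
noncomputable def faceMonomials (k : Type*) [Field k] {n : ℕ}
    (M F : AddSubmonoid (Fin n → ℤ)) : Submonoid (AddMonoidAlgebra k M) where
  carrier := {x | ∃ a : M, (a : Fin n → ℤ) ∈ F ∧ x = AddMonoidAlgebra.of' k M a}
  one_mem' := ⟨0, by simpa using F.zero_mem, by
    simp [AddMonoidAlgebra.of'_apply, AddMonoidAlgebra.one_def]⟩
  mul_mem' := by
    rintro x y ⟨a, ha, rfl⟩ ⟨b, hb, rfl⟩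
    exact ⟨a + b, by push_cast; exact F.add_mem ha hb, by
      simp [AddMonoidAlgebra.of'_apply, AddMonoidAlgebra.single_mul_single]⟩

/-!
The inclusion `M → M - F` induces an injective `k`-algebra map `k[M] → k[M - F]`. It sends each
`t^b` with `b ∈ F` to a unit (its inverse is `t^(-b)`), and every monomial `t^(a - b)` of
`k[M - F]` is `t^a / t^b`, so `k[M - F]` has the universal property of the localization at
these monomials.
-/

namespace AddMonoidAlgebra

variable {R M N : Type*} [CommSemiring R] [AddCommMonoid M] [AddCommMonoid N]

theorem isUnit_single_one {a : N} (ha : IsAddUnit a) : IsUnit (single a (1 : R)) := by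
  obtain ⟨b, hab⟩ := ha.exists_neg
  exact .of_mul_eq_one (single b 1) (by rw [single_mul_single, hab, one_mul, one_def])

variable (R) in
noncomputable def monomials (S : AddSubmonoid M) : Submonoid R[M] :=
  (AddSubmonoid.toSubmonoid S).map (of R M)

theorem mem_monomials {S : AddSubmonoid M} {x : R[M]} :
    x ∈ monomials R S ↔ ∃ s ∈ S, single s 1 = x := by
  simp only [monomials, Submonoid.mem_map, of_apply]
  exact ⟨fun ⟨s, hs, h⟩ ↦ ⟨_, hs, h⟩, fun ⟨s, hs, h⟩ ↦ ⟨.ofAdd s, hs, h⟩⟩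

theorem isLocalization_mapDomain (f : M →+ N) (hf : Function.Injective f) (S : AddSubmonoid M)
    (hS : ∀ s ∈ S, IsAddUnit (f s)) (hN : ∀ n, ∃ a, ∃ s ∈ S, n + f s = f a) :
    letI := (mapDomainRingHom R f).toAlgebra
    IsLocalization (monomials R S) R[N] :=
  letI := (mapDomainRingHom R f).toAlgebra
  have algebraMap_single (a : M) (r : R) : algebraMap R[M] R[N] (single a r) = single (f a) r :=
    mapDomain_single
  { map_units := by
      rintro ⟨_, hx⟩
      obtain ⟨s, hs, rfl⟩ := mem_monomials.1 hx
      rw [algebraMap_single]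
      exact isUnit_single_one (hS s hs)
    surj z := by
      induction z using induction_linear with
      | zero => exact ⟨(0, 1), by simp⟩
      | add x y hx hy =>
        obtain ⟨⟨a, s⟩, has⟩ := hx
        obtain ⟨⟨b, t⟩, hbt⟩ := hy
        refine ⟨(a * t + b * s, s * t), ?_⟩
        simp only [Submonoid.coe_mul, map_mul, map_add] at has hbt ⊢
        rw [← has, ← hbt]
        ring
      | single n r =>
        obtain ⟨a, s, hs, hn⟩ := hN n
        refine ⟨(single a r, ⟨single s 1, mem_monomials.2 ⟨s, hs, rfl⟩⟩), ?_⟩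
        simp only [algebraMap_single, single_mul_single, hn, mul_one]
    exists_of_eq h := ⟨1, congrArg _ (mapDomain_injective hf h)⟩ }

variable (R) in
noncomputable def localizationMonomialsAlgEquiv (f : M →+ N) (hf : Function.Injective f)
    (S : AddSubmonoid M) (hS : ∀ s ∈ S, IsAddUnit (f s)) (hN : ∀ n, ∃ a, ∃ s ∈ S, n + f s = f a) :
    Localization (monomials R S) ≃ₐ[R] R[N] :=
  letI := (mapDomainRingHom R f).toAlgebra
  haveI := isLocalization_mapDomain (R := R) f hf S hS hN
  haveI : IsScalarTower R R[M] R[N] := .of_algebraMap_eq fun r ↦ by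
    simp [RingHom.algebraMap_toAlgebra]
  (IsLocalization.algEquiv (monomials R S) (Localization (monomials R S)) R[N]).restrictScalars R

end AddMonoidAlgebra

open scoped Pointwise

namespace AddSubmonoid

variable {G : Type*} [AddCommGroup G] {M F : AddSubmonoid G}

theorem coe_sup_neg : ((M ⊔ -F : AddSubmonoid G) : Set G) = {c | ∃ a ∈ M, ∃ b ∈ F, c = a - b} := by
  ext c
  simp only [coe_sup, Set.mem_add, SetLike.mem_coe, mem_neg, Set.mem_ofPred_eq]
  constructor
  · rintro ⟨a, ha, b, hb, rfl⟩
    exact ⟨a, ha, -b, hb, by rw [sub_neg_eq_add]⟩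
  · rintro ⟨a, ha, b, hb, rfl⟩
    exact ⟨a, ha, -b, by rwa [neg_neg], by rw [sub_eq_add_neg]⟩

theorem isAddUnit_inclusion_sup_neg {s : M} (hs : (s : G) ∈ F) :
    IsAddUnit (inclusion (le_sup_left (b := -F)) s) :=
  isAddUnit_iff_exists_neg.2
    ⟨⟨-s, mem_sup_right (mem_neg.2 (by rwa [neg_neg]))⟩, Subtype.ext (add_neg_cancel (s : G))⟩

theorem exists_add_inclusion_sup_neg (hFM : F ≤ M) (c : ↥(M ⊔ -F)) :
    ∃ a, ∃ s ∈ F.comap M.subtype, c + inclusion le_sup_left s = inclusion le_sup_left a := by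
  obtain ⟨a, ha, b, hb, hc⟩ : (c : G) ∈ {c | ∃ a ∈ M, ∃ b ∈ F, c = a - b} := by
    rw [← coe_sup_neg]; exact c.2
  exact ⟨⟨a, ha⟩, ⟨b, hFM hb⟩, hb, Subtype.ext (by simp [hc])⟩

end AddSubmonoid

theorem faceMonomials_eq_monomials (k : Type*) [Field k] {n : ℕ} (M F : AddSubmonoid (Fin n → ℤ)) :
    faceMonomials k M F = AddMonoidAlgebra.monomials k (F.comap M.subtype) := by
  ext x
  rw [AddMonoidAlgebra.mem_monomials]
  exact ⟨fun ⟨a, ha, hx⟩ ↦ ⟨a, ha, hx.symm⟩, fun ⟨a, ha, hx⟩ ↦ ⟨a, ha, hx.symm⟩⟩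

theorem localization_at_face_monomials_general
    (k : Type*) [Field k] (n : ℕ)
    (M : AddSubmonoid (Fin n → ℤ))
    (F : AddSubmonoid (Fin n → ℤ)) (hF : IsFace M F) :
    ∃ N : AddSubmonoid (Fin n → ℤ),
      (N : Set (Fin n → ℤ)) = {c | ∃ a ∈ M, ∃ b ∈ F, c = a - b} ∧
      Nonempty (Localization (faceMonomials k M F) ≃ₐ[k] AddMonoidAlgebra k N) := by
  refine ⟨M ⊔ -F, AddSubmonoid.coe_sup_neg, ?_⟩
  rw [faceMonomials_eq_monomials]
  exact ⟨AddMonoidAlgebra.localizationMonomialsAlgEquiv k _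
    (AddSubmonoid.inclusion_injective le_sup_left) _
    (fun _ hs ↦ AddSubmonoid.isAddUnit_inclusion_sup_neg hs)
    (AddSubmonoid.exists_add_inclusion_sup_neg hF.1)⟩

/-- The localization `T_F⁻¹ k[M]` is isomorphic as a `k`-algebra to the semigroup ring of the
submonoid `M - F = {a - b : a ∈ M, b ∈ F}` of `ℤⁿ`. -/
theorem localization_at_face_monomials
    (k : Type*) [Field k] (n : ℕ) (hn : 1 ≤ n)
    (M : AddSubmonoid (Fin n → ℤ)) (hM : M.FG)
    (F : AddSubmonoid (Fin n → ℤ)) (hF : IsFace M F) :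
    ∃ N : AddSubmonoid (Fin n → ℤ),
      (N : Set (Fin n → ℤ)) = {c | ∃ a ∈ M, ∃ b ∈ F, c = a - b} ∧
      Nonempty (Localization (faceMonomials k M F) ≃ₐ[k] AddMonoidAlgebra k N) :=
  localization_at_face_monomials_general k n M F hF
end

section
/- Let k be a field and M a positive affine semigroup in ℤ^n. For a ∈ M let supp(a) denote the smallest face of M containing a. Let N be a k[M]-module with a direct sum decomposition N = ⊕_{a ∈ M} N_a into k-subspaces such that t^b · N_a ⊆ N_{a+b} for all a, b ∈ M, and assume that for all a, b ∈ M with supp(a+b) = supp(a) the multiplication map N_a → N_{a+b}, x ↦ t^b · x, is bijective. Then there exists a family of k-linear maps φ_{a,b} : N_b → N_a, defined for all pairs a, b ∈ M with supp(b) ⊆ supp(a), such that: (1) if a = b + c for some c ∈ M, then φ_{a,b} is the multiplication map x ↦ t^c · x; (2) φ_{a,b} is bijective whenever supp(a) = supp(b); (3) φ_{a,b} ∘ φ_{b,c} = φ_{a,c} for all a, b, c ∈ M with supp(c) ⊆ supp(b) ⊆ supp(a). -/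
/-- For `a ∉ M` no face contains `a`, and this is `⊤`. -/
def suppFace {n : ℕ} (M : AddSubmonoid (Fin n → ℤ)) (a : Fin n → ℤ) :
    AddSubmonoid (Fin n → ℤ) :=
  sInf {F | IsFace M F ∧ a ∈ F}

section Faces

variable {n : ℕ} {M : AddSubmonoid (Fin n → ℤ)} {a b : Fin n → ℤ}

theorem isFace_self : IsFace M M :=
  ⟨le_rfl, fun _ ha _ hb _ => ⟨ha, hb⟩⟩

theorem mem_suppFace : a ∈ suppFace M a :=
  AddSubmonoid.mem_sInf.2 fun _ hF => hF.2

theorem suppFace_le {F : AddSubmonoid (Fin n → ℤ)} (hF : IsFace M F) (ha : a ∈ F) :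
    suppFace M a ≤ F :=
  sInf_le ⟨hF, ha⟩

theorem isFace_suppFace (ha : a ∈ M) : IsFace M (suppFace M a) := by
  refine ⟨suppFace_le isFace_self ha, fun x hx y hy hxy => ?_⟩
  have mem_face {F} (hF : F ∈ {F | IsFace M F ∧ a ∈ F}) : x ∈ F ∧ y ∈ F :=
    hF.1.2 x hx y hy (AddSubmonoid.mem_sInf.1 hxy F hF)
  exact ⟨AddSubmonoid.mem_sInf.2 fun _ hF => (mem_face hF).1,
    AddSubmonoid.mem_sInf.2 fun _ hF => (mem_face hF).2⟩

theorem suppFace_add_of_le (ha : a ∈ M) (hb : b ∈ M) (h : suppFace M b ≤ suppFace M a) :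
    suppFace M (a + b) = suppFace M a := by
  apply le_antisymm
  · exact suppFace_le (isFace_suppFace ha) (add_mem mem_suppFace (h mem_suppFace))
  · exact suppFace_le (isFace_suppFace (add_mem ha hb))
      ((isFace_suppFace (add_mem ha hb)).2 a ha b hb mem_suppFace).1

end Faces

section GradedModule

open AddMonoidAlgebra

variable {k G N : Type*} [CommSemiring k] [AddCommMonoid G] [AddCommMonoid N]
  [Module (AddMonoidAlgebra k G) N]

theorem of'_add_smul (a b : G) (x : N) : of' k G (a + b) • x = of' k G a • of' k G b • x := by
  rw [← mul_smul, of'_apply, of'_apply, of'_apply, single_mul_single, one_mul]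

theorem of'_smul_comm (a b : G) (x : N) :
    of' k G a • of' k G b • x = of' k G b • of' k G a • x := by
  rw [← mul_smul, ← mul_smul, mul_comm]

variable [Module k N] [IsScalarTower k (AddMonoidAlgebra k G) N]
  (D : G → Submodule k N) (hmul : ∀ a b : G, ∀ x ∈ D a, of' k G b • x ∈ D (a + b))

noncomputable def monomialSMul (a b : G) : D a →ₗ[k] D (a + b) where
  toFun x := ⟨of' k G b • (x : N), hmul a b x x.2⟩
  map_add' _ _ := Subtype.ext (smul_add _ _ _)
  map_smul' c x := Subtype.ext (smul_comm _ c (x : N))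

@[simp]
theorem coe_monomialSMul (a b : G) (x : D a) :
    (monomialSMul D hmul a b x : N) = of' k G b • (x : N) :=
  rfl

noncomputable def monomialTransfer (a b : G) (hab : Function.Bijective (monomialSMul D hmul a b)) :
    D b →ₗ[k] D a :=
  (LinearEquiv.ofBijective _ hab).symm.toLinearMap ∘ₗ
    (LinearEquiv.ofEq _ _ (congrArg D (add_comm b a))).toLinearMap ∘ₗ monomialSMul D hmul b a

variable {D hmul} {a b c : G}

theorem of'_smul_monomialTransfer (hab : Function.Bijective (monomialSMul D hmul a b)) (x : D b) :
    of' k G b • (monomialTransfer D hmul a b hab x : N) = of' k G a • (x : N) := by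
  rw [← coe_monomialSMul D hmul]
  exact congrArg Subtype.val ((LinearEquiv.ofBijective _ hab).apply_symm_apply _)

theorem coe_monomialTransfer_of_eq_add (hab : Function.Bijective (monomialSMul D hmul a b))
    (habc : a = b + c) (x : D b) :
    (monomialTransfer D hmul a b hab x : N) = of' k G c • (x : N) := by
  subst habc
  refine congrArg Subtype.val (hab.1 (Subtype.ext ?_) : _ = (⟨_, hmul b c x x.2⟩ : D (b + c)))
  rw [coe_monomialSMul, of'_smul_monomialTransfer, of'_add_smul, coe_monomialSMul]

theorem monomialTransfer_bijective (hab : Function.Bijective (monomialSMul D hmul a b))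
    (hba : Function.Bijective (monomialSMul D hmul b a)) :
    Function.Bijective (monomialTransfer D hmul a b hab) :=
  (LinearEquiv.ofBijective _ hab).symm.bijective.comp
    ((LinearEquiv.ofEq _ _ (congrArg D (add_comm b a))).bijective.comp hba)

theorem monomialTransfer_comp (hab : Function.Bijective (monomialSMul D hmul a b))
    (hbc : Function.Bijective (monomialSMul D hmul b c))
    (hac : Function.Bijective (monomialSMul D hmul a c))
    (habc : Function.Injective (monomialSMul D hmul a (b + c))) :
    monomialTransfer D hmul a b hab ∘ₗ monomialTransfer D hmul b c hbc =
      monomialTransfer D hmul a c hac := by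
  ext x
  refine congrArg Subtype.val (habc (Subtype.ext ?_))
  simp only [LinearMap.comp_apply, coe_monomialSMul]
  calc of' k G (b + c) • (monomialTransfer D hmul a b hab (monomialTransfer D hmul b c hbc x) : N)
      = of' k G c • of' k G a • (monomialTransfer D hmul b c hbc x : N) := by
        rw [add_comm, of'_add_smul, of'_smul_monomialTransfer]
    _ = of' k G a • of' k G b • (x : N) := by
        rw [of'_smul_comm, of'_smul_monomialTransfer]
    _ = of' k G (b + c) • (monomialTransfer D hmul a c hac x : N) := by
        rw [of'_smul_comm, ← of'_smul_monomialTransfer hac, of'_add_smul]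

end GradedModule

theorem squarefree_module_maps_general
    (k : Type*) [Field k] (n : ℕ)
    (M : AddSubmonoid (Fin n → ℤ))
    (N : Type*) [AddCommGroup N] [Module (AddMonoidAlgebra k M) N]
    [Module k N] [IsScalarTower k (AddMonoidAlgebra k M) N]
    (D : M → Submodule k N)
    (hmul : ∀ (a b : M), ∀ x ∈ D a, AddMonoidAlgebra.of' k M b • x ∈ D (a + b))
    (hbij : ∀ a b : M, suppFace M ↑(a + b) = suppFace M ↑a →
      Function.Bijective (fun x : D a =>
        (⟨AddMonoidAlgebra.of' k M b • (x : N), hmul a b x x.2⟩ : D (a + b)))) :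
    ∃ φ : ∀ a b : M, suppFace M ↑b ≤ suppFace M ↑a → (D b →ₗ[k] D a),
      (∀ (a b c : M) (h : suppFace M ↑b ≤ suppFace M ↑a), a = b + c →
        ∀ x : D b, ((φ a b h) x : N) = AddMonoidAlgebra.of' k M c • (x : N)) ∧
      (∀ (a b : M) (h : suppFace M ↑b ≤ suppFace M ↑a), suppFace M ↑a = suppFace M ↑b →
        Function.Bijective (φ a b h)) ∧
      (∀ (a b c : M) (hab : suppFace M ↑b ≤ suppFace M ↑a)
        (hbc : suppFace M ↑c ≤ suppFace M ↑b),
        (φ a b hab).comp (φ b c hbc) = φ a c (hbc.trans hab)) := by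
  have hbij' (a b : M) (h : suppFace M b ≤ suppFace M a) :
      Function.Bijective (monomialSMul D hmul a b) :=
    hbij a b (suppFace_add_of_le a.2 b.2 h)
  refine ⟨fun a b h => monomialTransfer D hmul a b (hbij' a b h), ?_, ?_, ?_⟩
  · exact fun a b c h habc => coe_monomialTransfer_of_eq_add _ habc
  · exact fun a b h hab => monomialTransfer_bijective _ (hbij' b a hab.le)
  · intro a b c hab hbc
    have hbc_a : suppFace M ↑(b + c) ≤ suppFace M a :=
      (suppFace_add_of_le b.2 c.2 hbc).trans_le hab
    exact monomialTransfer_comp _ _ _ (hbij' a (b + c) hbc_a).1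

/-- For an `M`-graded module `N = ⊕_{a ∈ M} N_a` over `k[M]` such that multiplication
`N_a → N_{a+b}` is bijective whenever `supp(a+b) = supp(a)`, there is a compatible family of
`k`-linear maps `φ_{a,b} : N_b → N_a` for all `a, b ∈ M` with `supp(b) ⊆ supp(a)`. -/
theorem squarefree_module_maps
    (k : Type*) [Field k] (n : ℕ) (hn : 1 ≤ n)
    (M : AddSubmonoid (Fin n → ℤ)) (hM : M.FG)
    (hpos : ∀ a ∈ M, -a ∈ M → a = 0)
    (N : Type*) [AddCommGroup N] [Module (AddMonoidAlgebra k M) N]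
    [Module k N] [IsScalarTower k (AddMonoidAlgebra k M) N]
    (D : M → Submodule k N)
    (hinternal : DirectSum.IsInternal D)
    (hmul : ∀ (a b : M), ∀ x ∈ D a, AddMonoidAlgebra.of' k M b • x ∈ D (a + b))
    (hbij : ∀ a b : M, suppFace M ↑(a + b) = suppFace M ↑a →
      Function.Bijective (fun x : D a =>
        (⟨AddMonoidAlgebra.of' k M b • (x : N), hmul a b x x.2⟩ : D (a + b)))) :
    ∃ φ : ∀ a b : M, suppFace M ↑b ≤ suppFace M ↑a → (D b →ₗ[k] D a),
      (∀ (a b c : M) (h : suppFace M ↑b ≤ suppFace M ↑a), a = b + c →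
        ∀ x : D b, ((φ a b h) x : N) = AddMonoidAlgebra.of' k M c • (x : N)) ∧
      (∀ (a b : M) (h : suppFace M ↑b ≤ suppFace M ↑a), suppFace M ↑a = suppFace M ↑b →
        Function.Bijective (φ a b h)) ∧
      (∀ (a b c : M) (hab : suppFace M ↑b ≤ suppFace M ↑a)
        (hbc : suppFace M ↑c ≤ suppFace M ↑b),
        (φ a b hab).comp (φ b c hbc) = φ a c (hbc.trans hab)) :=
  squarefree_module_maps_general k n M N D hmul hbij
end
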